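/- Let H be a real Hilbert space of dimension at least 2. Then for every Banach space Y and every norm-one operator G ∈ L(H, Y), the numerical index n_G(H, Y) is 0; and for every Banach space X and every norm-one G ∈ L(X, H), n_G(X, H) = 0. -/

import Mathlib

/-!
An operator `S` on a real Hilbert space with `⟪S z, z⟫ = 0` for all `z` satisfies
`‖z + t • S z‖² = ‖z‖² + t² ‖S z‖²`, so `‖id + t • S‖ ≤ 1 + O(t²)`. Hence for `w = G ∘ S` (or
`S ∘ G`) we get `‖G + t • w‖ ≤ 1 + O(t²)`, and every functional norming `G` must then kill `w`:
the unit vector in the direction of `w` has numerical radius `0`. In dimension `≥ 2` the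
operators `z ↦ ⟪x, z⟫ y - ⟪y, z⟫ x` with `x ⊥ y` are rich enough to make `w ≠ 0` for every `G ≠ 0`.
-/

open NormedSpace

/-- Numerical radius of `z` with respect to the unit vector `u`. -/
noncomputable def vRad {Z : Type*} [NormedAddCommGroup Z] [NormedSpace ℝ Z] (u z : Z) : ℝ :=
  sSup {r : ℝ | ∃ φ : StrongDual ℝ Z, ‖φ‖ = 1 ∧ φ u = 1 ∧ |φ z| = r}

/-- Numerical index of the space with respect to the unit vector `u`. -/
noncomputable def nInd {Z : Type*} [NormedAddCommGroup Z] [NormedSpace ℝ Z] (u : Z) : ℝ :=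
  sInf {r : ℝ | ∃ z : Z, ‖z‖ = 1 ∧ vRad u z = r}

lemma eq_zero_of_forall_mul_le_mul_sq {a C : ℝ} (h : ∀ t : ℝ, t * a ≤ C * t ^ 2) : a = 0 := by
  have := h (a / (|C| + 1))
  have hC := le_abs_self C
  have hpos : 0 < |C| + 1 := by positivity
  rw [div_pow, mul_div_assoc', div_mul_eq_mul_div, div_le_div_iff₀ hpos (by positivity)] at this
  nlinarith [sq_nonneg a, mul_nonneg (abs_nonneg C) (sq_nonneg a)]

section NumericalIndex

variable {Z : Type*} [NormedAddCommGroup Z] [NormedSpace ℝ Z]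

lemma vRad_nonneg (u z : Z) : 0 ≤ vRad u z :=
  Real.sSup_nonneg (by rintro _ ⟨φ, -, -, rfl⟩; exact abs_nonneg _)

lemma vRad_eq_zero_of_forall {u z : Z}
    (h : ∀ φ : StrongDual ℝ Z, ‖φ‖ = 1 → φ u = 1 → φ z = 0) : vRad u z = 0 :=
  le_antisymm (Real.sSup_nonpos (by rintro _ ⟨φ, hφ, hφu, rfl⟩; simp [h φ hφ hφu]))
    (vRad_nonneg u z)

lemma nInd_eq_zero_of_vRad_eq_zero {u z : Z} (hz : ‖z‖ = 1) (h : vRad u z = 0) : nInd u = 0 :=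
  le_antisymm (csInf_le ⟨0, by rintro _ ⟨z, -, rfl⟩; exact vRad_nonneg u z⟩ ⟨z, hz, h⟩)
    (Real.sInf_nonneg (by rintro _ ⟨z, -, rfl⟩; exact vRad_nonneg u z))

lemma apply_eq_zero_of_norm_add_smul_le {u w : Z} {C : ℝ}
    (h : ∀ t : ℝ, ‖u + t • w‖ ≤ 1 + C * t ^ 2) {φ : StrongDual ℝ Z} (hφ : ‖φ‖ ≤ 1)
    (hφu : φ u = 1) : φ w = 0 :=
  eq_zero_of_forall_mul_le_mul_sq fun t => by
    have : 1 + t * φ w ≤ 1 + C * t ^ 2 :=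
      calc 1 + t * φ w = φ (u + t • w) := by simp [hφu]
        _ ≤ ‖φ (u + t • w)‖ := le_abs_self _
        _ ≤ ‖u + t • w‖ := (φ.le_of_opNorm_le hφ _).trans_eq (one_mul _)
        _ ≤ 1 + C * t ^ 2 := h t
    linarith

lemma nInd_eq_zero_of_norm_add_smul_le {u w : Z} (hw : w ≠ 0) {C : ℝ}
    (h : ∀ t : ℝ, ‖u + t • w‖ ≤ 1 + C * t ^ 2) : nInd u = 0 :=
  nInd_eq_zero_of_vRad_eq_zero (norm_smul_inv_norm hw) <| vRad_eq_zero_of_forall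
    fun φ hφ hφu => by rw [map_smul, apply_eq_zero_of_norm_add_smul_le h hφ.le hφu, smul_zero]

end NumericalIndex

lemma exists_ne_zero_inner_eq_zero {𝕜 E : Type*} [RCLike 𝕜] [NormedAddCommGroup E]
    [InnerProductSpace 𝕜 E] (hdim : 2 ≤ Module.rank 𝕜 E) (x : E) :
    ∃ y ≠ 0, inner 𝕜 x y = 0 := by
  have hspan : 𝕜 ∙ x ≠ ⊤ := fun htop => by
    have := (rank_span_le (R := 𝕜) {x}).trans_eq (Cardinal.mk_singleton x)
    rw [htop, rank_top] at this
    exact absurd (hdim.trans this) (by norm_num)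
  obtain ⟨y, hy, hy0⟩ := Submodule.exists_mem_ne_zero_of_ne_bot
    (mt Submodule.orthogonal_eq_bot_iff.mp hspan)
  exact ⟨y, hy0, Submodule.mem_orthogonal_singleton_iff_inner_right.mp hy⟩

section SkewOperators

open ContinuousLinearMap

variable {H : Type*} [NormedAddCommGroup H] [InnerProductSpace ℝ H]

lemma norm_id_add_smul_le {S : H →L[ℝ] H} (hS : ∀ z, inner ℝ (S z) z = 0) (t : ℝ) :
    ‖ContinuousLinearMap.id ℝ H + t • S‖ ≤ 1 + ‖S‖ ^ 2 * t ^ 2 := by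
  refine opNorm_le_bound _ (by positivity) fun z => ?_
  have hpyth : ‖z + t • S z‖ ^ 2 = ‖z‖ ^ 2 + t ^ 2 * ‖S z‖ ^ 2 := by
    rw [norm_add_sq_real, real_inner_smul_right, real_inner_comm, hS, norm_smul,
      Real.norm_eq_abs, mul_pow, sq_abs]
    ring
  have hSz : ‖S z‖ ^ 2 ≤ ‖S‖ ^ 2 * ‖z‖ ^ 2 := by
    rw [← mul_pow]; exact pow_le_pow_left₀ (norm_nonneg _) (S.le_opNorm z) 2
  refine le_of_pow_le_pow_left₀ two_ne_zero (by positivity) ?_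
  calc ‖z + t • S z‖ ^ 2 ≤ (1 + ‖S‖ ^ 2 * t ^ 2) * ‖z‖ ^ 2 := by
        rw [hpyth]; nlinarith [mul_le_mul_of_nonneg_left hSz (sq_nonneg t)]
    _ ≤ ((1 + ‖S‖ ^ 2 * t ^ 2) * ‖z‖) ^ 2 := by
        rw [mul_pow]; gcongr; nlinarith [sq_nonneg (‖S‖ * t)]

noncomputable def skewOp (x y : H) : H →L[ℝ] H :=
  (innerSL ℝ x).smulRight y - (innerSL ℝ y).smulRight x

lemma skewOp_apply (x y z : H) : skewOp x y z = inner ℝ x z • y - inner ℝ y z • x := by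
  simp [skewOp]

lemma inner_skewOp_apply_self (x y z : H) : inner ℝ (skewOp x y z) z = 0 := by
  rw [skewOp_apply, inner_sub_left, real_inner_smul_left, real_inner_smul_left]
  ring

lemma exists_comp_skew_ne_zero (hdim : 2 ≤ Module.rank ℝ H) {Y : Type*} [NormedAddCommGroup Y]
    [NormedSpace ℝ Y] {G : H →L[ℝ] Y} (hG : G ≠ 0) :
    ∃ S : H →L[ℝ] H, (∀ z, inner ℝ (S z) z = 0) ∧ G ∘L S ≠ 0 := by
  obtain ⟨x, hx⟩ := DFunLike.ne_iff.mp hG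
  obtain ⟨y, hy, hxy⟩ := exists_ne_zero_inner_eq_zero hdim x
  refine ⟨skewOp x y, inner_skewOp_apply_self x y, fun h0 => ?_⟩
  have : G (skewOp x y y) = 0 := congr($h0 y)
  simp_all [skewOp_apply]

lemma exists_skew_comp_ne_zero (hdim : 2 ≤ Module.rank ℝ H) {X : Type*} [NormedAddCommGroup X]
    [NormedSpace ℝ X] {G : X →L[ℝ] H} (hG : G ≠ 0) :
    ∃ S : H →L[ℝ] H, (∀ z, inner ℝ (S z) z = 0) ∧ S ∘L G ≠ 0 := by
  obtain ⟨x, hx⟩ := DFunLike.ne_iff.mp hG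
  obtain ⟨y, hy, hxy⟩ := exists_ne_zero_inner_eq_zero hdim (G x)
  refine ⟨skewOp (G x) y, inner_skewOp_apply_self (G x) y, fun h0 => ?_⟩
  have : skewOp (G x) y (G x) = 0 := congr($h0 x)
  simp_all [skewOp_apply, real_inner_comm]

end SkewOperators

theorem stmt13_general {H : Type*} [NormedAddCommGroup H] [InnerProductSpace ℝ H]
    (hdim : 2 ≤ Module.rank ℝ H) :
    (∀ (Y : Type*) [NormedAddCommGroup Y] [NormedSpace ℝ Y] [CompleteSpace Y]
        (G : H →L[ℝ] Y), ‖G‖ = 1 → nInd G = 0)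
    ∧ (∀ (X : Type*) [NormedAddCommGroup X] [NormedSpace ℝ X] [CompleteSpace X]
        (G : X →L[ℝ] H), ‖G‖ = 1 → nInd G = 0) := by
  refine ⟨fun Y _ _ _ G hG => ?_, fun X _ _ _ G hG => ?_⟩
  · obtain ⟨S, hS, hGS⟩ := exists_comp_skew_ne_zero hdim (norm_ne_zero_iff.mp (hG ▸ one_ne_zero))
    refine nInd_eq_zero_of_norm_add_smul_le hGS (C := ‖S‖ ^ 2) fun t => ?_
    calc ‖G + t • G ∘L S‖ = ‖G ∘L (ContinuousLinearMap.id ℝ H + t • S)‖ := by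
          rw [ContinuousLinearMap.comp_add, G.comp_id, ContinuousLinearMap.comp_smul]
      _ ≤ ‖G‖ * ‖ContinuousLinearMap.id ℝ H + t • S‖ := ContinuousLinearMap.opNorm_comp_le _ _
      _ ≤ 1 + ‖S‖ ^ 2 * t ^ 2 := by rw [hG, one_mul]; exact norm_id_add_smul_le hS t
  · obtain ⟨S, hS, hSG⟩ := exists_skew_comp_ne_zero hdim (norm_ne_zero_iff.mp (hG ▸ one_ne_zero))
    refine nInd_eq_zero_of_norm_add_smul_le hSG (C := ‖S‖ ^ 2) fun t => ?_
    calc ‖G + t • S ∘L G‖ = ‖(ContinuousLinearMap.id ℝ H + t • S) ∘L G‖ := by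
          rw [ContinuousLinearMap.add_comp, G.id_comp, ContinuousLinearMap.smul_comp]
      _ ≤ ‖ContinuousLinearMap.id ℝ H + t • S‖ * ‖G‖ := ContinuousLinearMap.opNorm_comp_le _ _
      _ ≤ 1 + ‖S‖ ^ 2 * t ^ 2 := by rw [hG, mul_one]; exact norm_id_add_smul_le hS t

theorem stmt13 {H : Type*} [NormedAddCommGroup H] [InnerProductSpace ℝ H] [CompleteSpace H]
    (hdim : 2 ≤ Module.rank ℝ H) :
    (∀ (Y : Type*) [NormedAddCommGroup Y] [NormedSpace ℝ Y] [CompleteSpace Y]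
        (G : H →L[ℝ] Y), ‖G‖ = 1 → nInd G = 0)
    ∧ (∀ (X : Type*) [NormedAddCommGroup X] [NormedSpace ℝ X] [CompleteSpace X]
        (G : X →L[ℝ] H), ‖G‖ = 1 → nInd G = 0) :=
  stmt13_general hdim
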